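/- arXiv:2208.13243 — 2 statements merged into one kernel-verified Lean document; each statement's English description precedes it below -/
import Mathlib

section
/- Let τ be a regular mapping. For every m ∈ ℤ and every natural number k, the interval [m, m+p^k) contains at most q^k elements of Λ(τ), i.e. #(Λ(τ) ∩ [m, m+p^k)) ≤ q^k. -/
open Filter Set
open scoped ENNReal NNReal

/-- The upper `r`-Beurling density of a set `Λ ⊆ ℝ`:
`D_r^+(Λ) = limsup_{h→∞} sup_{x∈ℝ} #(Λ ∩ (x−h, x+h)) / h^r`. -/
noncomputable def beurlingDensityPlus (r : ℝ) (Λ : Set ℝ) : ℝ≥0∞ :=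
  Filter.limsup
    (fun h : ℝ => ⨆ x : ℝ, ((Λ ∩ Set.Ioo (x - h) (x + h)).encard : ℝ≥0∞) / ENNReal.ofReal (h ^ r))
    Filter.atTop

/-- `wTake I k` is the word `I_{1,k}`: the first `k` letters of `I`, padded with `0`s if `k > |I|`. -/
def wTake (I : List ℕ) (k : ℕ) : List ℕ := (I ++ List.replicate k 0).take k

/-- `τ : Σ_q^* → {-1,0,…,p-2}` is a regular mapping (words are modelled as nonempty lists of
naturals `< q`): (i) `τ(0^n) = 0`; (ii) `τ(I) ∈ {-1,…,p-2}` and `τ(I) ≡ i_n (mod q)` where `i_n`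
is the last letter of `I`; (iii) for every word `I`, `τ(I0^l) = 0` for all sufficiently large `l`. -/
def IsRegularMap (p q : ℕ) (τ : List ℕ → ℤ) : Prop :=
  (∀ n : ℕ, 1 ≤ n → τ (List.replicate n 0) = 0) ∧
  (∀ I : List ℕ, I ≠ [] → (∀ i ∈ I, i < q) →
    (-1 ≤ τ I ∧ τ I ≤ (p : ℤ) - 2 ∧ (q : ℤ) ∣ (τ I - (I.getLast! : ℤ)))) ∧
  (∀ I : List ℕ, I ≠ [] → (∀ i ∈ I, i < q) →
    ∃ L : ℕ, ∀ l : ℕ, L ≤ l → τ (I ++ List.replicate l 0) = 0)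

/-- `τ*(I) = Σ_{k ≥ 1} τ(I_{1,k}) p^{k-1}` (a finite sum for regular `τ`). -/
noncomputable def tauStar (p : ℕ) (τ : List ℕ → ℤ) (I : List ℕ) : ℤ :=
  ∑ᶠ k : ℕ, τ (wTake I (k + 1)) * (p : ℤ) ^ k

/-- The maximal orthogonal set `Λ(τ) = {τ*(I) : I ∈ Σ_q^*} ∪ {0}`, viewed as a subset of `ℝ`. -/
def LambdaTau (p q : ℕ) (τ : List ℕ → ℤ) : Set ℝ :=
  {x : ℝ | ∃ I : List ℕ, I ≠ [] ∧ (∀ i ∈ I, i < q) ∧ x = (tauStar p τ I : ℝ)} ∪ {0}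

lemma wTake_length (I : List ℕ) (k : ℕ) : (wTake I k).length = k := by
  simp [wTake]

lemma wTake_wTake (I : List ℕ) {m k : ℕ} (h : m ≤ k) : wTake (wTake I k) m = wTake I m := by
  unfold wTake
  rw [List.take_append_of_le_length (by simpa using h), List.take_take, min_eq_left h]
  rw [List.take_append, List.take_append,
    List.take_replicate, List.take_replicate]
  congr 2
  omega

lemma wTake_of_ge (I : List ℕ) {k : ℕ} (h : I.length ≤ k) :
    wTake I k = I ++ List.replicate (k - I.length) 0 := by
  unfold wTake
  rw [List.take_append, List.take_of_length_le h, List.take_replicate]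
  congr 2
  omega

lemma wTake_replicate (k n : ℕ) : wTake (List.replicate k 0) n = List.replicate n 0 := by
  unfold wTake
  rw [← List.replicate_add, List.take_replicate]
  congr 1
  omega

/-- For every regular mapping `τ`, every `m ∈ ℤ` and every `k ∈ ℕ`, the interval `[m, m+p^k)`
contains at most `q^k` elements of `Λ(τ)`. -/
theorem card_lambdaTau_inter_Ico_le
    (p q : ℕ) (hq : 2 ≤ q) (hqp : q ≤ p) (hdvd : q ∣ p)
    (τ : List ℕ → ℤ) (hτ : IsRegularMap p q τ) (m : ℤ) (k : ℕ) :
    (LambdaTau p q τ ∩ Set.Ico (m : ℝ) ((m : ℝ) + (p : ℝ) ^ k)).encard ≤ (q ^ k : ℕ) := by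
  obtain ⟨h1, h2, h3⟩ := hτ
  have hp2 : 2 ≤ p := le_trans hq hqp
  set n : ℕ := p ^ k with hn
  have hnpos : 0 < n := pow_pos (by omega) k
  haveI : NeZero n := ⟨by omega⟩
  have hnint : (n : ℤ) = (p : ℤ) ^ k := by push_cast [hn]; ring
  set g : ℝ → ZMod n := fun x => ((⌊x⌋ : ℤ) : ZMod n) with hg
  set F : (Fin k → Fin q) → ZMod n := fun J =>
    ((∑ j ∈ Finset.range k,
      τ (wTake (List.ofFn fun i => ((J i : ℕ))) (j + 1)) * (p : ℤ) ^ j : ℤ) : ZMod n) with hF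
  have key : ∀ x ∈ LambdaTau p q τ, ∃ z : ℤ, x = (z : ℝ) ∧ ((z : ZMod n)) ∈ Set.range F := by
    intro x hx
    rcases hx with ⟨I, hI, hIq, rfl⟩ | hx
    · refine ⟨tauStar p τ I, rfl, ?_⟩
      obtain ⟨L, hL⟩ := h3 I hI hIq
      set M := I.length + L + k with hM
      have hsum : tauStar p τ I
          = ∑ j ∈ Finset.range M, τ (wTake I (j + 1)) * (p : ℤ) ^ j := by
        apply finsum_eq_finset_sum_of_support_subset
        intro j hj
        simp only [Function.mem_support] at hj
        by_contra hjM
        simp only [Finset.coe_range, Set.mem_Iio, not_lt] at hjM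
        apply hj
        have hlen : I.length ≤ j + 1 := by omega
        rw [wTake_of_ge _ hlen, hL _ (by omega), zero_mul]
      have hmemw : ∀ a ∈ wTake I k, a < q := by
        intro a ha
        have := List.mem_of_mem_take ha
        rcases List.mem_append.1 this with h | h
        · exact hIq a h
        · have : a = 0 := List.eq_of_mem_replicate h
          omega
      have hlenw : (wTake I k).length = k := wTake_length I k
      refine ⟨fun i => ⟨(wTake I k)[(i : ℕ)]'(by rw [hlenw]; exact i.isLt),
        hmemw _ (List.getElem_mem _)⟩, ?_⟩
      rw [hF]
      have hofFn : (List.ofFn fun i : Fin k =>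
          ((⟨(wTake I k)[(i : ℕ)]'(by rw [hlenw]; exact i.isLt),
            hmemw _ (List.getElem_mem _)⟩ : Fin q) : ℕ)) = wTake I k := by
        apply List.ext_getElem (by simp [hlenw])
        intro i h1' h2'
        simp
      simp only [hofFn]
      have hcongr : ∑ j ∈ Finset.range k, τ (wTake (wTake I k) (j + 1)) * (p : ℤ) ^ j
          = ∑ j ∈ Finset.range k, τ (wTake I (j + 1)) * (p : ℤ) ^ j :=
        Finset.sum_congr rfl fun j hj => by
          rw [wTake_wTake I (Nat.succ_le_of_lt (Finset.mem_range.1 hj))]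
      rw [hcongr, hsum]
      have hkM : k ≤ M := by omega
      rw [Finset.range_eq_Ico, Finset.range_eq_Ico, ← Finset.sum_Ico_consecutive _ (Nat.zero_le k) hkM,
        ← Finset.range_eq_Ico, Int.cast_add]
      have hzero : ((∑ j ∈ Finset.Ico k M, τ (wTake I (j + 1)) * (p : ℤ) ^ j : ℤ) : ZMod n)
          = 0 := by
        rw [ZMod.intCast_zmod_eq_zero_iff_dvd]
        apply Finset.dvd_sum
        intro j hj
        have hd : ((n : ℤ)) ∣ (p : ℤ) ^ j := by
          rw [hnint]; exact pow_dvd_pow _ (Finset.mem_Ico.1 hj).1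
        exact hd.mul_left _
      rw [hzero, add_zero]
    · refine ⟨0, by simpa using hx, ⟨fun _ => ⟨0, by omega⟩, ?_⟩⟩
      rw [hF]
      have : (List.ofFn fun _ : Fin k => (0 : ℕ)) = List.replicate k 0 :=
        List.ofFn_const _ _
      simp only [this]
      have : ∀ j ∈ Finset.range k,
          τ (wTake (List.replicate k 0) (j + 1)) * (p : ℤ) ^ j = 0 := by
        intro j _
        rw [wTake_replicate, h1 _ (by omega), zero_mul]
      rw [Finset.sum_congr rfl this]
      simp
  have hinj : Set.InjOn g (LambdaTau p q τ ∩ Set.Ico (m : ℝ) ((m : ℝ) + (p : ℝ) ^ k)) := by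
    rintro x ⟨hxΛ, hx1, hx2⟩ y ⟨hyΛ, hy1, hy2⟩ hxy
    obtain ⟨a, rfl, -⟩ := key x hxΛ
    obtain ⟨b, rfl, -⟩ := key y hyΛ
    simp only [hg, Int.floor_intCast] at hxy
    rw [ZMod.intCast_eq_intCast_iff] at hxy
    have hdvd' : (n : ℤ) ∣ b - a := hxy.dvd
    have ha1 : (m : ℤ) ≤ a := by exact_mod_cast hx1
    have ha2 : a < m + (p : ℤ) ^ k := by exact_mod_cast hx2
    have hb1 : (m : ℤ) ≤ b := by exact_mod_cast hy1
    have hb2 : b < m + (p : ℤ) ^ k := by exact_mod_cast hy2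
    have habs : |b - a| < (n : ℤ) := by
      rw [hnint, abs_lt]; omega
    have := Int.eq_zero_of_abs_lt_dvd hdvd' habs
    have hab : a = b := by omega
    rw [hab]
  calc (LambdaTau p q τ ∩ Set.Ico (m : ℝ) ((m : ℝ) + (p : ℝ) ^ k)).encard
      = (g '' (LambdaTau p q τ ∩ Set.Ico (m : ℝ) ((m : ℝ) + (p : ℝ) ^ k))).encard :=
        (hinj.encard_image).symm
    _ ≤ (Set.range F).encard := by
        apply Set.encard_le_encard
        rintro _ ⟨x, ⟨hxΛ, -⟩, rfl⟩
        obtain ⟨z, rfl, hz⟩ := key x hxΛ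
        simpa [hg, Int.floor_intCast] using hz
    _ = (F '' Set.univ).encard := by rw [Set.image_univ]
    _ ≤ (Set.univ : Set (Fin k → Fin q)).encard := Set.encard_image_le _ _
    _ = (q ^ k : ℕ) := by
        rw [Set.encard_univ, ENat.card_eq_coe_fintype_card]
        simp
end

section
/- For every regular mapping τ, limsup_{n→∞, n∈ℕ} sup_{m∈ℤ} #(Λ(τ) ∩ [m, m+n)) / n^s ≤ ((p−1)/(q−1))^s. -/
open Filter Set
open scoped ENNReal NNReal

lemma wTake_cons (i : ℕ) (J : List ℕ) (k : ℕ) : wTake (i :: J) (k + 1) = i :: wTake J k := by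
  unfold wTake
  rw [List.cons_append, List.take_succ_cons]
  congr 1
  have h : (J ++ List.replicate (k+1) 0) = (J ++ List.replicate k 0) ++ [0] := by
    rw [List.append_assoc]
    congr 1
    exact List.replicate_succ' (n := k)
  rw [h, List.take_append_of_le_length]
  simp

lemma wTake_eq_append (I : List ℕ) (k : ℕ) (h : I.length ≤ k) :
    wTake I k = I ++ List.replicate (k - I.length) 0 := by
  unfold wTake
  rw [List.take_append, List.take_of_length_le h, List.take_replicate]
  have hm : (k - I.length) ⊓ k = k - I.length := by omega
  rw [hm]


lemma mem_wTake (I : List ℕ) (k : ℕ) (j : ℕ) (hj : j ∈ wTake I k) : j ∈ I ∨ j = 0 := by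
  unfold wTake at hj
  have := List.mem_of_mem_take hj
  rcases List.mem_append.1 this with h | h
  · exact Or.inl h
  · exact Or.inr (List.eq_of_mem_replicate h)

lemma wTake_ne_nil (I : List ℕ) (k : ℕ) : wTake I (k+1) ≠ [] := by
  unfold wTake
  intro h
  have := congrArg List.length h
  simp [List.length_take, List.length_append, List.length_replicate] at this

/-- weaker than regular: only conditions (ii) and (iii). -/
def SubReg (p q : ℕ) (τ : List ℕ → ℤ) : Prop :=
  ∀ I : List ℕ, I ≠ [] → (∀ i ∈ I, i < q) →
    (-1 ≤ τ I ∧ τ I ≤ (p : ℤ) - 2 ∧ (q : ℤ) ∣ (τ I - (I.getLast! : ℤ)) ∧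
     ∃ L : ℕ, ∀ l : ℕ, L ≤ l → τ (I ++ List.replicate l 0) = 0)




lemma exists_bound {p q : ℕ} {τ : List ℕ → ℤ} (hτ : SubReg p q τ) {I : List ℕ}
    (hI : I ≠ []) (hlt : ∀ i ∈ I, i < q) :
    ∃ K : ℕ, ∀ k : ℕ, K ≤ k → τ (wTake I (k + 1)) = 0 := by
  obtain ⟨-, -, -, L, hL⟩ := hτ I hI hlt
  refine ⟨I.length + L, fun k hk => ?_⟩
  rw [wTake_eq_append I (k+1) (by omega)]
  exact hL _ (by omega)

lemma tauStar_eq_sum {p : ℕ} {τ : List ℕ → ℤ} {I : List ℕ} {K : ℕ}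
    (h : ∀ k : ℕ, K ≤ k → τ (wTake I (k + 1)) = 0) :
    tauStar p τ I = ∑ k ∈ Finset.range K, τ (wTake I (k + 1)) * (p : ℤ) ^ k := by
  refine finsum_eq_finset_sum_of_support_subset _ ?_
  intro k hk
  simp only [Function.mem_support, ne_eq] at hk
  simp only [Finset.coe_range, Set.mem_Iio]
  by_contra hc
  exact hk (by rw [h k (by omega)]; ring)


lemma tauStar_cons {p q : ℕ} {τ : List ℕ → ℤ} (hτ : SubReg p q τ)
    {i : ℕ} (hi : i < q) {J : List ℕ} (hltJ : ∀ j ∈ J, j < q) :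
    tauStar p τ (i :: J) = τ [i] + p * tauStar p (fun I => τ (i :: I)) J := by
  have hlt' : ∀ j ∈ i :: J, j < q := by
    intro j hj; rcases List.mem_cons.1 hj with rfl | hj; exacts [hi, hltJ j hj]
  obtain ⟨K₁, hK₁⟩ := exists_bound hτ (List.cons_ne_nil i J) hlt'
  have hτ' : ∀ k, K₁ ≤ k → (fun I => τ (i :: I)) (wTake J (k + 1)) = 0 := by
    intro k hk
    have := hK₁ (k+1) (by omega)
    rwa [wTake_cons] at this
  rw [tauStar_eq_sum (K := K₁ + 1) (fun k hk => hK₁ k (by omega)),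
      tauStar_eq_sum (K := K₁) hτ', Finset.sum_range_succ']
  have h0 : wTake (i :: J) 1 = [i] := by
    have := wTake_cons i J 0
    simpa [wTake] using this
  rw [h0]
  simp only [pow_zero, mul_one]
  rw [add_comm]
  congr 1
  rw [Finset.mul_sum]
  refine Finset.sum_congr rfl fun k _ => ?_
  rw [wTake_cons]
  ring

lemma getLast!_cons {i : ℕ} {I : List ℕ} (h : I ≠ []) : (i :: I).getLast! = I.getLast! := by
  cases I with
  | nil => exact absurd rfl h
  | cons a l => rw [List.getLast!_cons_eq_getLastD, List.getLast!_cons_eq_getLastD, List.getLastD_cons]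

lemma SubReg_cons {p q : ℕ} {τ : List ℕ → ℤ} (hτ : SubReg p q τ) {i : ℕ} (hi : i < q) :
    SubReg p q (fun I => τ (i :: I)) := by
  intro I hI hlt
  have hlt' : ∀ j ∈ i :: I, j < q := by
    intro j hj; rcases List.mem_cons.1 hj with rfl | hj; exacts [hi, hlt j hj]
  obtain ⟨h1, h2, h3, L, hL⟩ := hτ (i :: I) (List.cons_ne_nil i I) hlt'
  rw [getLast!_cons hI] at h3
  exact ⟨h1, h2, h3, L, fun l hl => by simpa using hL l hl⟩

noncomputable def sExp (p q : ℕ) : ℝ := Real.log q / Real.log p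
noncomputable def phiR (p q : ℕ) (n : ℕ) : ℝ :=
  ((p : ℝ) - 1) / ((q : ℝ) - 1) * ((n : ℝ) - 1) + 1
def LamZ (p q : ℕ) (τ : List ℕ → ℤ) : Set ℤ :=
  {z : ℤ | ∃ I : List ℕ, I ≠ [] ∧ (∀ i ∈ I, i < q) ∧ z = tauStar p τ I}

section numeric
variable {p q : ℕ}

lemma q1 (hq : 2 ≤ q) : (1:ℝ) < q := by exact_mod_cast Nat.lt_of_lt_of_le one_lt_two hq
lemma p1 (hq : 2 ≤ q) (hqp : q ≤ p) : (1:ℝ) < p := by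
  exact_mod_cast Nat.lt_of_lt_of_le (Nat.lt_of_lt_of_le one_lt_two hq) hqp

variable (hq : 2 ≤ q) (hqp : q ≤ p)
include hq hqp

lemma s_pos : 0 < sExp p q := div_pos (Real.log_pos (q1 hq)) (Real.log_pos (p1 hq hqp))

lemma s_le_one : sExp p q ≤ 1 := by
  rw [sExp, div_le_one (Real.log_pos (p1 hq hqp))]
  exact Real.log_le_log (by have := q1 hq; positivity) (by exact_mod_cast hqp)

lemma rpow_s : (p : ℝ) ^ (sExp p q) = q := by
  have hp0 : (0:ℝ) < p := by have := p1 hq hqp; linarith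
  have hq0 : (0:ℝ) < q := by have := q1 hq; linarith
  rw [sExp, Real.rpow_def_of_pos hp0, mul_comm, div_mul_cancel₀ _ (ne_of_gt (Real.log_pos (p1 hq hqp))),
    Real.exp_log hq0]

lemma rpow_inv_s : (q : ℝ) ^ (sExp p q)⁻¹ = p := by
  have hp0 : (0:ℝ) < p := by have := p1 hq hqp; linarith
  have hq0 : (0:ℝ) < q := by have := q1 hq; linarith
  rw [sExp, Real.rpow_def_of_pos hq0, inv_div, mul_comm, div_mul_cancel₀ _ (ne_of_gt (Real.log_pos (q1 hq))),
    Real.exp_log hp0]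

lemma gamma_pos : (0:ℝ) < ((p : ℝ) - 1) / ((q : ℝ) - 1) := by
  have h1 := q1 hq; have h2 := p1 hq hqp
  apply div_pos <;> linarith

lemma one_le_gamma : (1:ℝ) ≤ ((p : ℝ) - 1) / ((q : ℝ) - 1) := by
  have h1 := q1 hq
  rw [le_div_iff₀ (by linarith)]
  have h2 : (q:ℝ) ≤ p := by exact_mod_cast hqp
  linarith

lemma phiR_mono {k l : ℕ} (h : k ≤ l) : phiR p q k ≤ phiR p q l := by
  unfold phiR
  have h1 := gamma_pos hq hqp
  have h2 : (k:ℝ) ≤ l := by exact_mod_cast h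
  nlinarith

lemma one_le_phiR {k : ℕ} (h : 1 ≤ k) : 1 ≤ phiR p q k := by
  have := phiR_mono hq hqp h
  simpa [phiR] using this

omit hq hqp in
lemma phiR_one : phiR p q 1 = 1 := by simp [phiR]

/-- base numeric lemma: `min q n ≤ φ(n)^s` for `n ≥ 1`. -/
lemma base_numeric {n : ℕ} (hn : 1 ≤ n) :
    (min q n : ℝ) ≤ (phiR p q n) ^ (sExp p q) := by
  have hs := s_pos hq hqp
  have hq1 := q1 hq
  have hp1 := p1 hq hqp
  have hne : (q:ℝ) - 1 ≠ 0 := by linarith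
  rcases le_or_gt n q with hnq | hnq
  · -- n ≤ q : min = n; use convexity of x ^ (1/s)
    rw [min_eq_right (show (n:ℝ) ≤ (q:ℝ) by exact_mod_cast hnq)]
    have hconv := convexOn_rpow (p := (sExp p q)⁻¹) ((one_le_inv₀ hs).2 (s_le_one hq hqp))
    set wa : ℝ := ((q:ℝ) - n) / ((q:ℝ) - 1) with hwa
    set wb : ℝ := ((n:ℝ) - 1) / ((q:ℝ) - 1) with hwb
    have hna : (1:ℝ) ≤ n := by exact_mod_cast hn
    have hnq' : (n:ℝ) ≤ q := by exact_mod_cast hnq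
    have hwa0 : 0 ≤ wa := by apply div_nonneg <;> linarith
    have hwb0 : 0 ≤ wb := by apply div_nonneg <;> linarith
    have hwab : wa + wb = 1 := by rw [hwa, hwb, ← add_div, div_eq_one_iff_eq hne]; ring
    have hkey := hconv.2 (Set.mem_Ici.2 (by norm_num : (0:ℝ) ≤ 1))
      (Set.mem_Ici.2 (by positivity : (0:ℝ) ≤ (q:ℝ))) hwa0 hwb0 hwab
    simp only [smul_eq_mul] at hkey
    have hcomb : wa * 1 + wb * (q:ℝ) = n := by rw [hwa, hwb]; field_simp; ring
    have h1 : (1:ℝ) ^ (sExp p q)⁻¹ = 1 := Real.one_rpow _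
    have hq' : (q:ℝ) ^ (sExp p q)⁻¹ = p := rpow_inv_s hq hqp
    rw [hcomb, h1, hq'] at hkey
    have hphi : wa * 1 + wb * (p:ℝ) = phiR p q n := by
      rw [hwa, hwb]; unfold phiR; field_simp; ring
    rw [hphi] at hkey
    calc (n:ℝ) = ((n:ℝ) ^ (sExp p q)⁻¹) ^ (sExp p q) := by
          rw [← Real.rpow_mul (by positivity), inv_mul_cancel₀ hs.ne', Real.rpow_one]
      _ ≤ (phiR p q n) ^ (sExp p q) :=
          Real.rpow_le_rpow (Real.rpow_nonneg (by positivity) _) hkey hs.le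
  · -- q < n : min = q = p^s ≤ φ(n)^s
    rw [min_eq_left (show (q:ℝ) ≤ (n:ℝ) by exact_mod_cast hnq.le), ← rpow_s hq hqp]
    apply Real.rpow_le_rpow (by positivity) _ hs.le
    have h : (p:ℝ) = phiR p q q := by
      unfold phiR; rw [div_mul_cancel₀ _ hne]; ring
    rw [h]
    exact phiR_mono hq hqp (by omega)

/-- key inductive-step numeric inequality. -/
lemma key_numeric {a b : ℕ} (ha : 1 ≤ a) :
    (min b q : ℝ) * (phiR p q (a+1)) ^ (sExp p q)
      + ((q:ℝ) - (min b q : ℝ)) * (phiR p q a) ^ (sExp p q)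
    ≤ (phiR p q (p*a+b)) ^ (sExp p q) := by
  have hs := s_pos hq hqp
  have hq1 := q1 hq
  have hp1 := p1 hq hqp
  have hne : (q:ℝ) - 1 ≠ 0 := by linarith
  have hq0 : (0:ℝ) < q := by linarith
  have hγ : (0:ℝ) < ((p : ℝ) - 1) / ((q : ℝ) - 1) := gamma_pos hq hqp
  set γ : ℝ := ((p : ℝ) - 1) / ((q : ℝ) - 1) with hγdef
  have hγ1 : ((q:ℝ) - 1) * γ = (p:ℝ) - 1 := by
    rw [hγdef, mul_div_cancel₀]; exact hne
  set c : ℝ := (min b q : ℝ) with hc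
  have hc0 : 0 ≤ c := by positivity
  have hcq : c ≤ q := by
    rw [hc]; exact_mod_cast Nat.cast_le.2 (min_le_right b q)
  have hcb : c ≤ b := by
    rw [hc]; exact_mod_cast Nat.cast_le.2 (min_le_left b q)
  set A : ℝ := phiR p q (a+1) with hA
  set B : ℝ := phiR p q a with hB
  have hA1 : 1 ≤ A := one_le_phiR hq hqp (by omega)
  have hB1 : 1 ≤ B := one_le_phiR hq hqp ha
  have hAB : A = B + γ := by
    rw [hA, hB]; unfold phiR; push_cast; ring
  set W : ℝ := (c / q) * A + ((q - c)/q) * B with hW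
  have hW0 : 0 ≤ W := by
    apply add_nonneg <;> apply mul_nonneg
    · positivity
    · linarith
    · apply div_nonneg <;> linarith
    · linarith
  set V : ℝ := c * A + ((q:ℝ) - c) * B with hVdef
  have hV0 : 0 ≤ V := by
    apply add_nonneg <;> apply mul_nonneg <;> linarith
  -- the linear inequality
  have hpcb : (p:ℝ) * c ≤ q * b + q * p - q * q := by
    have hpq : (q:ℝ) ≤ p := by exact_mod_cast hqp
    rcases le_total b q with hbq | hbq
    · have hcb' : c = b := by rw [hc]; norm_cast; omega
      have hbq' : (b:ℝ) ≤ q := by exact_mod_cast hbq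
      nlinarith [mul_nonneg (sub_nonneg.2 hpq) (sub_nonneg.2 hbq')]
    · have hcb' : c = q := by rw [hc]; norm_cast; omega
      have hbq' : (q:ℝ) ≤ b := by exact_mod_cast hbq
      nlinarith
  have key : 0 ≤ γ * ((q:ℝ) * b + q * p - q * q - p * c) := by
    apply mul_nonneg hγ.le; linarith
  have h2 : γ * ((q:ℝ) - 1) = (p:ℝ) - 1 := by linarith [hγ1]
  have hBexp : B = γ * ((a:ℝ) - 1) + 1 := by rw [hB]; unfold phiR; rw [← hγdef]
  have hAexp : A = γ * ((a:ℝ) - 1) + 1 + γ := by rw [hAB, hBexp]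
  have hφexp : phiR p q (p*a+b) = γ * ((p:ℝ)*(a:ℝ) + (b:ℝ) - 1) + 1 := by
    unfold phiR; rw [← hγdef]; push_cast; ring
  have hlin2 : (p:ℝ) * V ≤ (q:ℝ) * phiR p q (p*a+b) := by
    have h2q : (q:ℝ) * (γ * ((q:ℝ) - 1)) = (q:ℝ) * ((p:ℝ) - 1) := by rw [h2]
    have hdiff : (q:ℝ) * (γ * ((p:ℝ)*(a:ℝ) + (b:ℝ) - 1) + 1)
        - (p:ℝ) * (c * (γ*((a:ℝ)-1)+1+γ) + ((q:ℝ)-c) * (γ*((a:ℝ)-1)+1))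
        = γ * ((q:ℝ)*b + q*p - q*q - p*c) + ((q:ℝ) * (γ*((q:ℝ)-1)) - (q:ℝ)*((p:ℝ)-1)) := by
      ring
    rw [hVdef, hAexp, hBexp, hφexp]
    linarith [key, hdiff, h2q]
  -- Jensen
  have hconc := Real.concaveOn_rpow (s_pos hq hqp).le (s_le_one hq hqp)
  have hq0' : (q:ℝ) ≠ 0 := by linarith
  have hj := hconc.2 (Set.mem_Ici.2 (by linarith : (0:ℝ) ≤ A))
    (Set.mem_Ici.2 (by linarith : (0:ℝ) ≤ B))
    (by positivity : (0:ℝ) ≤ c / q)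
    (by apply div_nonneg <;> linarith : (0:ℝ) ≤ ((q:ℝ) - c) / q)
    (by field_simp; ring)
  simp only [smul_eq_mul] at hj
  have hcomb : (c/q) * A + (((q:ℝ)-c)/q) * B = V / q := by rw [hVdef]; ring
  rw [hcomb] at hj
  have hVq0 : 0 ≤ V / q := by positivity
  calc c * A ^ sExp p q + ((q:ℝ) - c) * B ^ sExp p q
      = (q:ℝ) * ((c/q) * A ^ sExp p q + (((q:ℝ)-c)/q) * B ^ sExp p q) := by
        field_simp
    _ ≤ (q:ℝ) * ((V / q) ^ sExp p q) := by
        apply mul_le_mul_of_nonneg_left hj (by linarith)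
    _ = (p:ℝ) ^ sExp p q * (V / q) ^ sExp p q := by rw [rpow_s hq hqp]
    _ = ((p:ℝ) * (V / q)) ^ sExp p q := (Real.mul_rpow (by positivity) hVq0).symm
    _ ≤ (phiR p q (p*a+b)) ^ sExp p q := by
        apply Real.rpow_le_rpow (by positivity) _ hs.le
        rw [mul_div_assoc', div_le_iff₀ (by linarith : (0:ℝ) < q)]
        linarith [hlin2]
end numeric


lemma ncard_biUnion_le {α β : Type*} (s : Finset α) (f : α → Set β) :
    (⋃ i ∈ s, f i).ncard ≤ ∑ i ∈ s, (f i).ncard := by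
  classical
  induction s using Finset.induction with
  | empty => simp
  | @insert a s h ih =>
    rw [Finset.sum_insert h]
    refine le_trans (le_of_eq (by rw [Finset.set_biUnion_insert])) ?_
    exact le_trans (Set.ncard_union_le _ _) (by omega)

section struct
variable {p q : ℕ}

lemma wTake_nil_eq (k : ℕ) : wTake ([] : List ℕ) k = List.replicate k 0 := by
  unfold wTake
  rw [List.nil_append, List.take_replicate, min_self]

lemma tauStar_nil_eq (p : ℕ) (τ : List ℕ → ℤ) : tauStar p τ [] = tauStar p τ [0] := by
  unfold tauStar
  apply finsum_congr
  intro k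
  rw [wTake_cons, wTake_nil_eq, wTake_nil_eq, List.replicate_succ]

/-- decomposition of `Λ(τ)` according to the first letter. -/
lemma LamZ_decomp (hq : 2 ≤ q) {τ : List ℕ → ℤ} (hτ : SubReg p q τ) :
    LamZ p q τ ⊆ ⋃ i ∈ Finset.range q,
      (fun w : ℤ => τ [i] + (p:ℤ) * w) '' LamZ p q (fun I => τ (i :: I)) := by
  rintro z ⟨I, hIne, hIlt, rfl⟩
  cases I with
  | nil => exact absurd rfl hIne
  | cons i J =>
    have hi : i < q := hIlt i List.mem_cons_self
    have hltJ : ∀ j ∈ J, j < q := fun j hj => hIlt j (List.mem_cons_of_mem i hj)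
    simp only [Set.mem_iUnion, Set.mem_image, Finset.mem_range]
    cases J with
    | nil =>
      refine ⟨i, hi, tauStar p (fun I => τ (i :: I)) [0], ⟨[0], by simp, by simp; omega, rfl⟩, ?_⟩
      rw [← tauStar_nil_eq, ← tauStar_cons hτ hi (by simp)]
    | cons j J' =>
      refine ⟨i, hi, tauStar p (fun I => τ (i :: I)) (j :: J'),
        ⟨j :: J', by simp, hltJ, rfl⟩, ?_⟩
      rw [← tauStar_cons hτ hi hltJ]

/-- The main counting estimate. -/
lemma main_count (hq : 2 ≤ q) (hqp : q ≤ p) :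
    ∀ n : ℕ, 1 ≤ n → ∀ τ : List ℕ → ℤ, SubReg p q τ → ∀ m : ℤ,
    ((LamZ p q τ ∩ Set.Ico m (m + (n:ℤ))).ncard : ℝ) ≤ (phiR p q n) ^ (sExp p q) := by
  intro n
  induction n using Nat.strong_induction_on with
  | _ n IH =>
  intro hn τ hτ m
  have hp2 : 2 ≤ p := hqp.trans' hq
  have hpz : (0:ℤ) < (p:ℤ) := by exact_mod_cast Nat.lt_of_lt_of_le (by norm_num) hp2
  -- notation
  set a : ℕ := n / p with ha
  set b : ℕ := n % p with hb
  have hnab : p * a + b = n := Nat.div_add_mod n p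
  set c : ℕ → ℤ := fun i => τ [i] with hc
  set u : ℕ → ℤ := fun i => m - c i - 1 with hu
  set lo : ℕ → ℤ := fun i => u i / p + 1 with hlo
  set hig : ℕ → ℤ := fun i => (u i + n) / p + 1 with hhig
  -- basic bounds on the digits c i, for i < q
  have hcbound : ∀ i : ℕ, i < q → (-1 ≤ c i ∧ c i ≤ (p:ℤ) - 2 ∧ (q:ℤ) ∣ (c i - i)) := by
    intro i hi
    obtain ⟨h1, h2, h3, -⟩ := hτ [i] (by simp) (by simpa using hi)
    refine ⟨h1, h2, ?_⟩
    simpa using h3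
  -- the covering
  have cover : LamZ p q τ ∩ Set.Ico m (m + (n:ℤ)) ⊆
      ⋃ i ∈ Finset.range q,
        (fun w : ℤ => c i + (p:ℤ) * w) ''
          (LamZ p q (fun I => τ (i :: I)) ∩ Set.Ico (lo i) (hig i)) := by
    rintro z ⟨hzL, hzI⟩
    obtain ⟨i, hiq, w, hw, hwz⟩ := by
      have := LamZ_decomp hq hτ hzL
      simpa only [Set.mem_iUnion, Set.mem_image, Finset.mem_range] using this
    simp only [Set.mem_iUnion, Set.mem_image, Finset.mem_range]
    refine ⟨i, hiq, w, ⟨hw, ?_, ?_⟩, hwz⟩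
    · -- lo i ≤ w
      rw [hlo, Int.add_one_le_iff, Int.ediv_lt_iff_lt_mul hpz]
      have : m ≤ c i + (p:ℤ) * w := by rw [hwz]; exact hzI.1
      rw [hu]; push_cast; linarith [this]
    · -- w < hig i
      rw [hhig, Int.lt_add_one_iff, Int.le_ediv_iff_mul_le hpz]
      have : c i + (p:ℤ) * w < m + n := by rw [hwz]; exact hzI.2
      rw [hu]; push_cast; linarith [this]
  -- cardinality over the union
  have hfin : ∀ i : ℕ, (LamZ p q (fun I => τ (i :: I)) ∩ Set.Ico (lo i) (hig i)).Finite :=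
    fun i => Set.Finite.subset (Set.finite_Ico _ _) Set.inter_subset_right
  have hinj : ∀ i : ℕ, Function.Injective (fun w : ℤ => c i + (p:ℤ) * w) := by
    intro i x y hxy
    simp only at hxy
    have : (p:ℤ) * x = (p:ℤ) * y := by linarith [hxy]
    exact mul_left_cancel₀ (ne_of_gt hpz) this
  have hcard1 : ((LamZ p q τ ∩ Set.Ico m (m + (n:ℤ))).ncard : ℝ) ≤
      ∑ i ∈ Finset.range q,
        ((LamZ p q (fun I => τ (i :: I)) ∩ Set.Ico (lo i) (hig i)).ncard : ℝ) := by
    have h1 := Set.ncard_le_ncard cover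
      (Set.Finite.biUnion (Finset.range q).finite_toSet
        (fun i _ => Set.Finite.image _ (hfin i)))
    have h2 := ncard_biUnion_le (Finset.range q)
      (fun i => (fun w : ℤ => c i + (p:ℤ) * w) ''
        (LamZ p q (fun I => τ (i :: I)) ∩ Set.Ico (lo i) (hig i)))
    have h3 : ∀ i : ℕ, ((fun w : ℤ => c i + (p:ℤ) * w) ''
        (LamZ p q (fun I => τ (i :: I)) ∩ Set.Ico (lo i) (hig i))).ncard
        = (LamZ p q (fun I => τ (i :: I)) ∩ Set.Ico (lo i) (hig i)).ncard :=
      fun i => Set.ncard_image_of_injective _ (hinj i)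
    have hN : (LamZ p q τ ∩ Set.Ico m (m + (n:ℤ))).ncard ≤
        ∑ i ∈ Finset.range q,
          (LamZ p q (fun I => τ (i :: I)) ∩ Set.Ico (lo i) (hig i)).ncard :=
      le_trans h1 (le_trans h2 (le_of_eq (Finset.sum_congr rfl fun i _ => h3 i)))
    exact_mod_cast hN
  -- window size analysis
  have hbp : (b:ℤ) < (p:ℤ) := by exact_mod_cast Nat.mod_lt n (by omega)
  have humod : ∀ i : ℕ, 0 ≤ u i % (p:ℤ) ∧ u i % (p:ℤ) < (p:ℤ) :=
    fun i => ⟨Int.emod_nonneg _ (ne_of_gt hpz), Int.emod_lt_of_pos _ hpz⟩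
  have hsplit : ∀ i : ℕ, hig i - lo i = (a:ℤ) + (u i % (p:ℤ) + b) / (p:ℤ) := by
    intro i
    have h1 : (n:ℤ) = (b:ℤ) + (a:ℤ) * (p:ℤ) := by
      have := hnab; push_cast [← this]; ring
    have hde := Int.mul_ediv_add_emod (u i) (p:ℤ)
    have h2 : u i + (n:ℤ) = ((u i % (p:ℤ) + b) + ((u i / (p:ℤ)) + a) * (p:ℤ)) := by
      rw [h1]; linarith [hde]
    rw [hhig, hlo]
    simp only
    rw [h2, Int.add_mul_ediv_right _ _ (ne_of_gt hpz)]
    ring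
  have hdiv_nonneg : ∀ i : ℕ, 0 ≤ (u i % (p:ℤ) + b) / (p:ℤ) :=
    fun i => Int.ediv_nonneg (by linarith [(humod i).1, Int.ofNat_nonneg b]) hpz.le
  have hdiv_le_one : ∀ i : ℕ, (u i % (p:ℤ) + b) / (p:ℤ) ≤ 1 := by
    intro i
    have : (u i % (p:ℤ) + b) / (p:ℤ) < 2 := by
      rw [Int.ediv_lt_iff_lt_mul hpz]
      linarith [(humod i).2, hbp]
    omega
  have hsize_le : ∀ i : ℕ, hig i - lo i ≤ (a:ℤ) + 1 := by
    intro i; rw [hsplit i]; linarith [hdiv_le_one i]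
  have hsize_lt : ∀ i : ℕ, u i % (p:ℤ) + b < (p:ℤ) → hig i - lo i ≤ (a:ℤ) := by
    intro i h
    have : (u i % (p:ℤ) + b) / (p:ℤ) < 1 := by
      rw [Int.ediv_lt_iff_lt_mul hpz]; linarith
    rw [hsplit i]; omega
  -- the set of "ceiling" classes
  classical
  set Cs : Finset ℕ := (Finset.range q).filter (fun i => (p:ℤ) ≤ u i % (p:ℤ) + b) with hCs
  have hCs_le_b : Cs.card ≤ b := by
    have hmaps : ∀ i ∈ Cs, u i % (p:ℤ) ∈ Finset.Ico ((p:ℤ) - b) (p:ℤ) := by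
      intro i hi
      rw [hCs, Finset.mem_filter] at hi
      rw [Finset.mem_Ico]
      exact ⟨by linarith [hi.2], (humod i).2⟩
    have hinj2 : ∀ i ∈ Cs, ∀ j ∈ Cs, u i % (p:ℤ) = u j % (p:ℤ) → i = j := by
      intro i hi j hj hij
      rw [hCs, Finset.mem_filter, Finset.mem_range] at hi hj
      have hdvd : (p:ℤ) ∣ u j - u i := Int.ModEq.dvd (hij : u i ≡ u j [ZMOD (p:ℤ)])
      have huij : u j - u i = c i - c j := by rw [hu]; ring
      obtain ⟨hi1, hi2, hi3⟩ := hcbound i hi.1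
      obtain ⟨hj1, hj2, hj3⟩ := hcbound j hj.1
      have hcc : c i - c j = 0 := by
        refine Int.eq_zero_of_abs_lt_dvd (huij ▸ hdvd) ?_
        rw [abs_lt]; constructor <;> linarith
      have hqd : (q:ℤ) ∣ ((j:ℤ) - (i:ℤ)) := by
        have := dvd_sub hi3 hj3
        have heq : (c i - (i:ℤ)) - (c j - (j:ℤ)) = (j:ℤ) - i + (c i - c j) := by ring
        rw [heq, hcc, add_zero] at this
        exact this
      have : (j:ℤ) - (i:ℤ) = 0 := by
        refine Int.eq_zero_of_abs_lt_dvd hqd ?_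
        rw [abs_lt]
        constructor <;>
          [exact_mod_cast (by omega : -(q:ℤ) < (j:ℤ) - (i:ℤ));
           exact_mod_cast (by omega : (j:ℤ) - (i:ℤ) < (q:ℤ))]
      omega
    have := Finset.card_le_card_of_injOn _ hmaps hinj2
    calc Cs.card ≤ (Finset.Ico ((p:ℤ) - b) (p:ℤ)).card := this
      _ = b := by rw [Int.card_Ico]; omega
  have hCs_le_q : Cs.card ≤ q := by
    calc Cs.card ≤ (Finset.range q).card := Finset.card_le_card (Finset.filter_subset _ _)
      _ = q := Finset.card_range q
  have hCs_min : Cs.card ≤ min b q := le_min hCs_le_b hCs_le_q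
  -- per-index bound via the induction hypothesis (used when the window is sub-divided)
  have hbound : ∀ t : ℕ, 1 ≤ t → t < n → ∀ i, i < q → hig i - lo i ≤ (t:ℤ) →
      ((LamZ p q (fun I => τ (i :: I)) ∩ Set.Ico (lo i) (hig i)).ncard : ℝ)
        ≤ phiR p q t ^ sExp p q := by
    intro t ht htn i hiq hsz
    rcases le_or_gt (hig i) (lo i) with hle | hlt
    · have hemp : Set.Ico (lo i) (hig i) = ∅ := Set.Ico_eq_empty (not_lt.2 hle)
      rw [hemp, Set.inter_empty, Set.ncard_empty]
      simp only [Nat.cast_zero]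
      exact Real.rpow_nonneg (by linarith [one_le_phiR hq hqp ht]) _
    · obtain ⟨k, hk⟩ : ∃ k : ℕ, (k:ℤ) = hig i - lo i :=
        ⟨(hig i - lo i).toNat, Int.toNat_of_nonneg (by linarith)⟩
      have hk1 : 1 ≤ k := by
        have h9 : (1:ℤ) ≤ (k:ℤ) := by linarith
        exact_mod_cast h9
      have hkt : k ≤ t := by
        have h9 : (k:ℤ) ≤ (t:ℤ) := by linarith
        exact_mod_cast h9
      have h10 : hig i = lo i + (k:ℤ) := by linarith
      rw [h10]
      refine le_trans (IH k (by omega) hk1 _ (SubReg_cons hτ hiq) (lo i)) ?_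
      exact Real.rpow_le_rpow (by linarith [one_le_phiR hq hqp hk1])
        (phiR_mono hq hqp hkt) (s_pos hq hqp).le
  have hpa : 2 * a ≤ p * a := Nat.mul_le_mul_right a hp2
  rcases Nat.eq_zero_or_pos a with ha0 | ha1
  · -- case a = 0 : short windows
    have hbn : b = n := by
      have h := hnab; rw [ha0, Nat.mul_zero, Nat.zero_add] at h; exact h
    have hper : ∀ i ∈ Finset.range q,
        ((LamZ p q (fun I => τ (i :: I)) ∩ Set.Ico (lo i) (hig i)).ncard : ℝ)
          ≤ (if (p:ℤ) ≤ u i % (p:ℤ) + b then (1:ℝ) else 0) := by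
      intro i _
      by_cases hcnd : (p:ℤ) ≤ u i % (p:ℤ) + b
      · rw [if_pos hcnd]
        have hsz : hig i - lo i ≤ 1 := by
          have h := hsize_le i; rw [ha0] at h; simpa using h
        have hsub : LamZ p q (fun I => τ (i :: I)) ∩ Set.Ico (lo i) (hig i)
            ⊆ {lo i} := by
          rintro z ⟨-, hz1, hz2⟩
          simp only [Set.mem_singleton_iff]
          omega
        calc ((LamZ p q (fun I => τ (i :: I)) ∩ Set.Ico (lo i) (hig i)).ncard : ℝ)
            ≤ (({lo i} : Set ℤ).ncard : ℝ) := by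
              exact_mod_cast Set.ncard_le_ncard hsub (Set.finite_singleton _)
          _ = 1 := by rw [Set.ncard_singleton]; norm_num
      · rw [if_neg hcnd]
        have hemp : Set.Ico (lo i) (hig i) = ∅ := by
          apply Set.Ico_eq_empty
          have := hsize_lt i (by omega)
          omega
        rw [hemp, Set.inter_empty, Set.ncard_empty]
        norm_num
    calc ((LamZ p q τ ∩ Set.Ico m (m + (n:ℤ))).ncard : ℝ)
        ≤ _ := hcard1
      _ ≤ ∑ i ∈ Finset.range q, (if (p:ℤ) ≤ u i % (p:ℤ) + b then (1:ℝ) else 0) :=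
          Finset.sum_le_sum hper
      _ = (Cs.card : ℝ) := by rw [Finset.sum_boole, hCs]
      _ ≤ (min (q:ℝ) (n:ℝ)) := by
          have h7 : Cs.card ≤ min q n := by omega
          have h8 : ((min q n : ℕ) : ℝ) = min (q:ℝ) (n:ℝ) := by
            push_cast [Nat.cast_min]; ring_nf
          rw [← h8]
          exact_mod_cast h7
      _ ≤ phiR p q n ^ sExp p q := base_numeric hq hqp hn
  · -- case 1 ≤ a
    set X : ℝ := phiR p q (a+1) ^ sExp p q with hX
    set Y : ℝ := phiR p q a ^ sExp p q with hY
    have hY0 : 0 ≤ Y := Real.rpow_nonneg (by linarith [one_le_phiR hq hqp ha1]) _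
    have hYX : Y ≤ X :=
      Real.rpow_le_rpow (by linarith [one_le_phiR hq hqp ha1])
        (phiR_mono hq hqp (by omega)) (s_pos hq hqp).le
    have hper : ∀ i ∈ Finset.range q,
        ((LamZ p q (fun I => τ (i :: I)) ∩ Set.Ico (lo i) (hig i)).ncard : ℝ)
          ≤ (if (p:ℤ) ≤ u i % (p:ℤ) + b then X else Y) := by
      intro i hi
      rw [Finset.mem_range] at hi
      by_cases hcnd : (p:ℤ) ≤ u i % (p:ℤ) + b
      · rw [if_pos hcnd]
        have hb1 : 1 ≤ b := by
          have := (humod i).2; omega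
        have han : a + 1 < n := by omega
        refine hbound (a+1) (by omega) han i hi ?_
        have := hsize_le i; push_cast; omega
      · rw [if_neg hcnd]
        have han : a < n := by omega
        refine hbound a ha1 han i hi (hsize_lt i (by omega))
    have hsum_ite : ∑ i ∈ Finset.range q, (if (p:ℤ) ≤ u i % (p:ℤ) + b then X else Y)
        = (Cs.card : ℝ) * X + ((q:ℝ) - Cs.card) * Y := by
      rw [Finset.sum_ite, Finset.sum_const, Finset.sum_const]
      have h4 : ((Finset.range q).filter (fun i => ¬ ((p:ℤ) ≤ u i % (p:ℤ) + b))).card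
          = q - Cs.card := by
        have h5 := Finset.card_filter_add_card_filter_not
          (s := Finset.range q) (p := fun i => (p:ℤ) ≤ u i % (p:ℤ) + b)
        rw [Finset.card_range] at h5
        rw [hCs]
        omega
      rw [← hCs, h4, nsmul_eq_mul, nsmul_eq_mul, Nat.cast_sub hCs_le_q]
    have hlast : (Cs.card : ℝ) * X + ((q:ℝ) - Cs.card) * Y
        ≤ (min (b:ℝ) (q:ℝ)) * X + ((q:ℝ) - min (b:ℝ) (q:ℝ)) * Y := by
      have h6 : (Cs.card : ℝ) ≤ min (b:ℝ) (q:ℝ) := by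
        have h8 : ((min b q : ℕ) : ℝ) = min (b:ℝ) (q:ℝ) := by push_cast [Nat.cast_min]; ring_nf
        rw [← h8]; exact_mod_cast hCs_min
      nlinarith [mul_nonneg (sub_nonneg.2 h6) (sub_nonneg.2 hYX)]
    calc ((LamZ p q τ ∩ Set.Ico m (m + (n:ℤ))).ncard : ℝ)
        ≤ _ := hcard1
      _ ≤ ∑ i ∈ Finset.range q, (if (p:ℤ) ≤ u i % (p:ℤ) + b then X else Y) :=
          Finset.sum_le_sum hper
      _ = (Cs.card : ℝ) * X + ((q:ℝ) - Cs.card) * Y := hsum_ite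
      _ ≤ (min (b:ℝ) (q:ℝ)) * X + ((q:ℝ) - min (b:ℝ) (q:ℝ)) * Y := hlast
      _ ≤ phiR p q (p*a+b) ^ sExp p q := by
          have hkey := key_numeric hq hqp (p := p) (a := a) (b := b) ha1
          rw [hX, hY]
          exact_mod_cast hkey
      _ = phiR p q n ^ sExp p q := by rw [hnab]
end struct

section assemble
variable {p q : ℕ} {τ : List ℕ → ℤ}

lemma SubReg_of_regular (hτ : IsRegularMap p q τ) : SubReg p q τ := by
  intro I hI hlt
  obtain ⟨h1, h2, h3⟩ := hτ.2.1 I hI hlt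
  obtain ⟨L, hL⟩ := hτ.2.2 I hI hlt
  exact ⟨h1, h2, h3, L, hL⟩

lemma zero_mem_LamZ (hq : 2 ≤ q) (hτ : IsRegularMap p q τ) : (0:ℤ) ∈ LamZ p q τ := by
  refine ⟨[0], by simp, by simp; omega, ?_⟩
  unfold tauStar
  rw [← finsum_zero (α := ℕ)]
  apply finsum_congr
  intro k
  have h : wTake [0] (k+1) = List.replicate (k+1) 0 := by
    rw [wTake_cons, wTake_nil_eq, List.replicate_succ]
  rw [h, hτ.1 (k+1) (by omega), zero_mul]

lemma LambdaTau_eq (hq : 2 ≤ q) (hτ : IsRegularMap p q τ) :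
    LambdaTau p q τ = (fun z : ℤ => (z : ℝ)) '' LamZ p q τ := by
  ext x
  constructor
  · rintro (⟨I, hI, hlt, rfl⟩ | hx)
    · exact ⟨tauStar p τ I, ⟨I, hI, hlt, rfl⟩, rfl⟩
    · rw [Set.mem_singleton_iff] at hx
      exact ⟨0, zero_mem_LamZ hq hτ, by rw [hx]; norm_num⟩
  · rintro ⟨z, ⟨I, hI, hlt, rfl⟩, rfl⟩
    exact Or.inl ⟨I, hI, hlt, rfl⟩

/-- For every regular mapping `τ`,
`limsup_{n→∞, n∈ℕ} sup_{m∈ℤ} #(Λ(τ) ∩ [m, m+n)) / n^s ≤ ((p−1)/(q−1))^s`,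
where `s = log q / log p`. -/
theorem limsup_integer_interval_density_le
    (p q : ℕ) (hq : 2 ≤ q) (hqp : q ≤ p) (hdvd : q ∣ p)
    (τ : List ℕ → ℤ) (hτ : IsRegularMap p q τ) :
    Filter.limsup
        (fun n : ℕ => ⨆ m : ℤ,
          ((LambdaTau p q τ ∩ Set.Ico (m : ℝ) ((m : ℝ) + (n : ℝ))).encard : ℝ≥0∞) /
            ENNReal.ofReal ((n : ℝ) ^ (Real.log q / Real.log p)))
        Filter.atTop
      ≤ ENNReal.ofReal ((((p : ℝ) - 1) / ((q : ℝ) - 1)) ^ (Real.log q / Real.log p)) := by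
  have hsub : SubReg p q τ := SubReg_of_regular hτ
  have hs : Real.log q / Real.log p = sExp p q := rfl
  set s : ℝ := sExp p q with hsdef
  set B : ℝ := (((p : ℝ) - 1) / ((q : ℝ) - 1)) ^ s with hB
  have hγ1 : (1:ℝ) ≤ ((p : ℝ) - 1) / ((q : ℝ) - 1) := one_le_gamma hq hqp
  -- eventual bound
  apply Filter.limsup_le_of_le (by isBoundedDefault)
  filter_upwards [Filter.eventually_ge_atTop 1] with n hn
  -- identify the intersection with the integer picture
  apply iSup_le
  intro m
  have hset : LambdaTau p q τ ∩ Set.Ico (m : ℝ) ((m : ℝ) + (n : ℝ))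
      = (fun z : ℤ => (z : ℝ)) '' (LamZ p q τ ∩ Set.Ico (m : ℤ) (m + (n:ℤ))) := by
    rw [LambdaTau_eq hq hτ]
    ext x
    constructor
    · rintro ⟨⟨z, hz, rfl⟩, hx1, hx2⟩
      simp only at hx1 hx2
      refine ⟨z, ⟨hz, ?_, ?_⟩, rfl⟩
      · exact_mod_cast hx1
      · exact_mod_cast hx2
    · rintro ⟨z, ⟨hz, h1, h2⟩, rfl⟩
      refine ⟨⟨z, hz, rfl⟩, ?_, ?_⟩ <;> simp only
      · exact_mod_cast h1
      · push_cast
        exact_mod_cast h2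
  rw [hset]
  -- finiteness and cardinality
  have hfin : (LamZ p q τ ∩ Set.Ico (m : ℤ) (m + (n:ℤ))).Finite :=
    Set.Finite.subset (Set.finite_Ico _ _) Set.inter_subset_right
  have henc : ((fun z : ℤ => (z : ℝ)) '' (LamZ p q τ ∩ Set.Ico (m : ℤ) (m + (n:ℤ)))).encard
      = ((LamZ p q τ ∩ Set.Ico (m : ℤ) (m + (n:ℤ))).ncard : ℕ∞) := by
    rw [Set.InjOn.encard_image (fun x _ y _ h => by exact_mod_cast h)]
    exact hfin.encard_eq_coe_toFinset_card.trans
      (by rw [Set.ncard_eq_toFinset_card _ hfin])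
  rw [henc]
  -- the numeric bound
  have hcount := main_count hq hqp n hn τ hsub m
  have hphi : phiR p q n ≤ (((p : ℝ) - 1) / ((q : ℝ) - 1)) * n := by
    unfold phiR
    have hn1 : (1:ℝ) ≤ (n:ℝ) := by exact_mod_cast hn
    nlinarith
  have hr : (phiR p q n) ^ s ≤ B * (n:ℝ) ^ s := by
    calc (phiR p q n) ^ s ≤ ((((p : ℝ) - 1) / ((q : ℝ) - 1)) * n) ^ s :=
          Real.rpow_le_rpow (by linarith [one_le_phiR hq hqp hn]) hphi (s_pos hq hqp).le
      _ = B * (n:ℝ) ^ s := Real.mul_rpow (by linarith) (by positivity)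
  have hfinalR : ((LamZ p q τ ∩ Set.Ico (m : ℤ) (m + (n:ℤ))).ncard : ℝ) ≤ B * (n:ℝ) ^ s :=
    le_trans hcount hr
  -- pass to ℝ≥0∞
  have hnpos : (0:ℝ) < (n:ℝ) ^ s := by
    have : (0:ℝ) < (n:ℝ) := by exact_mod_cast hn
    positivity
  rw [ENNReal.div_le_iff
    (by simp only [ne_eq, ENNReal.ofReal_eq_zero, not_le, hs]; exact hnpos)
    (by simp)]
  calc ((((LamZ p q τ ∩ Set.Ico (m : ℤ) (m + (n:ℤ))).ncard : ℕ∞)) : ℝ≥0∞)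
      = ENNReal.ofReal (((LamZ p q τ ∩ Set.Ico (m : ℤ) (m + (n:ℤ))).ncard : ℝ)) := by
        rw [ENNReal.ofReal_natCast]; norm_cast
    _ ≤ ENNReal.ofReal (B * (n:ℝ) ^ s) := ENNReal.ofReal_le_ofReal hfinalR
    _ = ENNReal.ofReal B * ENNReal.ofReal ((n:ℝ) ^ s) := by
        rw [ENNReal.ofReal_mul (by positivity)]
end assemble
end
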